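/- arXiv:0707.0048 — 4 statements merged into one kernel-verified Lean document; each statement's English description precedes it below -/
import Mathlib

section
/- Let 𝖧 be a complex Hilbert space and let G₁ = (S₁, L₁, H₁) and G₂ = (S₂, L₂, H₂) be two n-channel system triples in which S₁ and S₂ are unitary n×n matrices of bounded operators on 𝖧, L₁ and L₂ are n×1 vectors of bounded operators, and H₁, H₂ are bounded self-adjoint operators. Define S₂′ = S₁† S₂ S₁, L₂′ = S₁†(S₂ − I)L₁ + S₁† L₂, and H₂′ = H₂ + Im{ L₂†(S₂ + I)L₁ − L₁† S₂ L₁ }, where Im{X} := (X − X†)/(2i). Then the series products agree componentwise: G₂ ◁ G₁ = G₁ ◁ (S₂′, L₂′, H₂′), i.e. S₂S₁ = S₁S₂′, L₂ + S₂L₁ = L₁ + S₁L₂′, and the Hamiltonian components of G₂ ◁ G₁ and G₁ ◁ (S₂′, L₂′, H₂′) coincide. -/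
/- Series product of quantum system triples (Gough–James), Theorem 2 (existence part):
the cascade G₂ ◁ G₁ is parametrically equivalent to G₁ ◁ G₂′ with
S₂′ = S₁† S₂ S₁, L₂′ = S₁†(S₂ − I)L₁ + S₁† L₂,
H₂′ = H₂ + Im{ L₂†(S₂ + I)L₁ − L₁† S₂ L₁ }. -/

noncomputable section

open Matrix

variable {E : Type*} [NormedAddCommGroup E] [InnerProductSpace ℂ E] [CompleteSpace E]

/-- `L₂† S L₁ = Σ_{j,k} (L₂ j)* (S j k) (L₁ k)`. -/
def quadForm {n : ℕ} (L₂ : Fin n → (E →L[ℂ] E)) (S : Matrix (Fin n) (Fin n) (E →L[ℂ] E))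
    (L₁ : Fin n → (E →L[ℂ] E)) : E →L[ℂ] E :=
  ∑ j, ∑ k, star (L₂ j) * S j k * L₁ k

/-- Scattering-matrix component of the series product `G₂ ◁ G₁`. -/
def seriesS {n : ℕ} (S₂ S₁ : Matrix (Fin n) (Fin n) (E →L[ℂ] E)) :
    Matrix (Fin n) (Fin n) (E →L[ℂ] E) := S₂ * S₁

/-- Coupling-vector component of the series product `G₂ ◁ G₁`: `L₂ + S₂ L₁`. -/
def seriesL {n : ℕ} (S₂ : Matrix (Fin n) (Fin n) (E →L[ℂ] E))
    (L₂ L₁ : Fin n → (E →L[ℂ] E)) : Fin n → (E →L[ℂ] E) :=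
  fun j => L₂ j + S₂.mulVec L₁ j

/-- Hamiltonian component of the series product `G₂ ◁ G₁`:
`H₁ + H₂ + (1/(2i))(L₂†S₂L₁ − L₁†S₂†L₂)`. -/
def seriesH {n : ℕ} (S₂ : Matrix (Fin n) (Fin n) (E →L[ℂ] E))
    (L₂ L₁ : Fin n → (E →L[ℂ] E)) (H₁ H₂ : E →L[ℂ] E) : E →L[ℂ] E :=
  H₁ + H₂ + ((2 * Complex.I)⁻¹) • (quadForm L₂ S₂ L₁ - star (quadForm L₂ S₂ L₁))

/-- `Im X = (X − X†)/(2i)`. -/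
def opIm (X : E →L[ℂ] E) : E →L[ℂ] E := ((2 * Complex.I)⁻¹) • (X - star X)

lemma quadForm_add_middle {n : ℕ} (L : Fin n → (E →L[ℂ] E))
    (S T : Matrix (Fin n) (Fin n) (E →L[ℂ] E)) (M : Fin n → (E →L[ℂ] E)) :
    quadForm L (S + T) M = quadForm L S M + quadForm L T M := by
  simp [quadForm, Matrix.add_apply, mul_add, add_mul, Finset.sum_add_distrib]

lemma quadForm_sub_middle {n : ℕ} (L : Fin n → (E →L[ℂ] E))
    (S T : Matrix (Fin n) (Fin n) (E →L[ℂ] E)) (M : Fin n → (E →L[ℂ] E)) :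
    quadForm L (S - T) M = quadForm L S M - quadForm L T M := by
  simp [quadForm, Matrix.sub_apply, mul_sub, sub_mul, Finset.sum_sub_distrib]

lemma quadForm_add_right {n : ℕ} (L : Fin n → (E →L[ℂ] E))
    (S : Matrix (Fin n) (Fin n) (E →L[ℂ] E)) (M N : Fin n → (E →L[ℂ] E)) :
    quadForm L S (fun k => M k + N k) = quadForm L S M + quadForm L S N := by
  simp [quadForm, mul_add, Finset.sum_add_distrib]

lemma quadForm_mulVec {n : ℕ} (L : Fin n → (E →L[ℂ] E))
    (S B : Matrix (Fin n) (Fin n) (E →L[ℂ] E)) (M : Fin n → (E →L[ℂ] E)) :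
    quadForm L S (fun k => B.mulVec M k) = quadForm L (S * B) M := by
  unfold quadForm
  simp only [Matrix.mulVec, dotProduct, Matrix.mul_apply,
    Finset.mul_sum, Finset.sum_mul]
  refine Finset.sum_congr rfl fun j _ => ?_
  rw [Finset.sum_comm]
  exact Finset.sum_congr rfl fun k _ => Finset.sum_congr rfl fun l _ => by simp only [mul_assoc]

lemma star_quadForm {n : ℕ} (L : Fin n → (E →L[ℂ] E))
    (S : Matrix (Fin n) (Fin n) (E →L[ℂ] E)) (M : Fin n → (E →L[ℂ] E)) :
    star (quadForm L S M) = quadForm M Sᴴ L := by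
  unfold quadForm
  rw [star_sum]
  rw [Finset.sum_comm]
  refine Finset.sum_congr rfl fun k _ => ?_
  rw [star_sum]
  refine Finset.sum_congr rfl fun j _ => ?_
  simp [Matrix.conjTranspose_apply, mul_assoc]

lemma opIm_add (X Y : E →L[ℂ] E) : opIm (X + Y) = opIm X + opIm Y := by
  unfold opIm
  rw [← smul_add]
  congr 1
  rw [star_add]
  abel

lemma opIm_sub (X Y : E →L[ℂ] E) : opIm (X - Y) = opIm X - opIm Y := by
  unfold opIm
  rw [← smul_sub]
  congr 1
  rw [star_sub]
  abel

lemma opIm_of_selfAdjoint {X : E →L[ℂ] E} (h : star X = X) : opIm X = 0 := by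
  unfold opIm
  rw [h, sub_self, smul_zero]

theorem series_exchange_exists {n : ℕ}
    (S₁ S₂ : Matrix (Fin n) (Fin n) (E →L[ℂ] E)) (L₁ L₂ : Fin n → (E →L[ℂ] E))
    (H₁ H₂ : E →L[ℂ] E)
    (hS₁ : S₁ᴴ * S₁ = 1 ∧ S₁ * S₁ᴴ = 1)
    (hS₂ : S₂ᴴ * S₂ = 1 ∧ S₂ * S₂ᴴ = 1)
    (hH₁ : IsSelfAdjoint H₁) (hH₂ : IsSelfAdjoint H₂) :
    seriesS S₂ S₁ = seriesS S₁ (S₁ᴴ * S₂ * S₁) ∧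
    seriesL S₂ L₂ L₁ =
      seriesL S₁ L₁ (fun j => (S₁ᴴ * (S₂ - 1)).mulVec L₁ j + S₁ᴴ.mulVec L₂ j) ∧
    seriesH S₂ L₂ L₁ H₁ H₂ =
      seriesH S₁ L₁ (fun j => (S₁ᴴ * (S₂ - 1)).mulVec L₁ j + S₁ᴴ.mulVec L₂ j)
        (H₂ + opIm (quadForm L₂ (S₂ + 1) L₁ - quadForm L₁ S₂ L₁)) H₁ := by
  obtain ⟨h₁, h₂⟩ := hS₁
  refine ⟨?_, ?_, ?_⟩
  · show S₂ * S₁ = S₁ * (S₁ᴴ * S₂ * S₁)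
    rw [← mul_assoc, ← mul_assoc, h₂, one_mul]
  · funext j
    show L₂ j + S₂.mulVec L₁ j
      = L₁ j + S₁.mulVec (fun k => (S₁ᴴ * (S₂ - 1)).mulVec L₁ k + S₁ᴴ.mulVec L₂ k) j
    have hv : (fun k => (S₁ᴴ * (S₂ - 1)).mulVec L₁ k + S₁ᴴ.mulVec L₂ k)
        = (S₁ᴴ * (S₂ - 1)).mulVec L₁ + S₁ᴴ.mulVec L₂ := rfl
    rw [hv, Matrix.mulVec_add, Matrix.mulVec_mulVec, Matrix.mulVec_mulVec,
      ← mul_assoc, h₂, one_mul, Matrix.sub_mulVec, Matrix.one_mulVec,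
      Matrix.one_mulVec]
    simp only [Pi.add_apply, Pi.sub_apply]
    abel
  · have hseries : ∀ (S : Matrix (Fin n) (Fin n) (E →L[ℂ] E))
        (A B : Fin n → (E →L[ℂ] E)) (X Y : E →L[ℂ] E),
        seriesH S A B X Y = X + Y + opIm (quadForm A S B) := fun _ _ _ _ _ => rfl
    rw [hseries, hseries]
    have hL₂' : quadForm L₁ S₁ (fun j => (S₁ᴴ * (S₂ - 1)).mulVec L₁ j + S₁ᴴ.mulVec L₂ j)
        = quadForm L₁ S₂ L₁ - quadForm L₁ 1 L₁ + quadForm L₁ 1 L₂ := by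
      rw [quadForm_add_right, quadForm_mulVec, quadForm_mulVec,
        ← mul_assoc, h₂, one_mul, quadForm_sub_middle]
    rw [hL₂', quadForm_add_middle]
    set a := quadForm L₂ S₂ L₁
    set b := quadForm L₂ 1 L₁
    set c := quadForm L₁ S₂ L₁
    set d := quadForm L₁ 1 L₁
    set e := quadForm L₁ 1 L₂
    have hd : opIm d = 0 := by
      apply opIm_of_selfAdjoint
      rw [star_quadForm, Matrix.conjTranspose_one]
    have hbe : opIm b + opIm e = 0 := by
      rw [← opIm_add]
      apply opIm_of_selfAdjoint
      rw [star_add, star_quadForm, star_quadForm, Matrix.conjTranspose_one, add_comm]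
    have he : opIm e = -opIm b := by
      rw [eq_neg_iff_add_eq_zero, add_comm]; exact hbe
    rw [opIm_sub, opIm_add, opIm_add, opIm_sub, hd, he]
    abel
end
end

section
/- Let 𝖧 be a complex Hilbert space and let G₁ = (S₁, L₁, H₁) and G₂ = (S₂, L₂, H₂) be n-channel system triples with S₁ and S₂ unitary and H₁, H₂ self-adjoint. If (S′, L′, H′) is any n-channel system triple satisfying G₂ ◁ G₁ = G₁ ◁ (S′, L′, H′) (equality of all three components of the series products), then necessarily S′ = S₁†S₂S₁, L′ = S₁†(S₂ − I)L₁ + S₁†L₂, and H′ = H₂ + Im{ L₂†(S₂ + I)L₁ − L₁†S₂L₁ }, where Im{X} := (X − X†)/(2i). In particular, the triple (S₂′, L₂′, H₂′) making the two cascades parametrically equivalent is unique. -/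
/-!
Since `S₁† S₁ = I`, `S₁` can be cancelled on the left in the scattering and coupling
equations, which gives `S′` and `L′`. Writing `L₁† S L = star L₁ ⬝ᵥ (S L)` and substituting
`S₁ L′ = L₂ + S₂ L₁ − L₁` into the Hamiltonian equation, the two sides differ by the
imaginary part of `L₁†L₁ − L₁†L₂ − L₂†L₁`, which vanishes because this operator is
self-adjoint.
-/

noncomputable section

open Matrix

variable {E : Type*} [NormedAddCommGroup E] [InnerProductSpace ℂ E] [CompleteSpace E]

lemma opIm_star (X : E →L[ℂ] E) : opIm (star X) = -opIm X := by
  simp only [opIm, star_star, ← smul_neg, neg_sub]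

lemma IsSelfAdjoint.opIm_eq_zero {X : E →L[ℂ] E} (hX : IsSelfAdjoint X) : opIm X = 0 := by
  simp only [opIm, hX.star_eq, sub_self, smul_zero]

section SeriesProduct

variable {n : ℕ}

lemma quadForm_eq_star_dotProduct_mulVec (L₂ : Fin n → (E →L[ℂ] E))
    (S : Matrix (Fin n) (Fin n) (E →L[ℂ] E)) (L₁ : Fin n → (E →L[ℂ] E)) :
    quadForm L₂ S L₁ = star L₂ ⬝ᵥ (S *ᵥ L₁) := by
  simp only [quadForm, dotProduct, mulVec, Finset.mul_sum, mul_assoc, Pi.star_apply]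

lemma seriesH_eq_add_opIm_quadForm (S : Matrix (Fin n) (Fin n) (E →L[ℂ] E))
    (L₂ L₁ : Fin n → (E →L[ℂ] E)) (H₁ H₂ : E →L[ℂ] E) :
    seriesH S L₂ L₁ H₁ H₂ = H₁ + H₂ + opIm (quadForm L₂ S L₁) :=
  rfl

lemma eq_conjTranspose_mul_of_seriesS_eq {S₁ S₂ S' : Matrix (Fin n) (Fin n) (E →L[ℂ] E)}
    (hS₁ : S₁ᴴ * S₁ = 1) (heqS : seriesS S₂ S₁ = seriesS S₁ S') :
    S' = S₁ᴴ * S₂ * S₁ :=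
  calc S' = S₁ᴴ * S₁ * S' := by rw [hS₁, one_mul]
    _ = S₁ᴴ * (S₂ * S₁) := by rw [mul_assoc]; exact congrArg (S₁ᴴ * ·) heqS.symm
    _ = S₁ᴴ * S₂ * S₁ := (mul_assoc _ _ _).symm

omit [CompleteSpace E] in
lemma mulVec_eq_of_seriesL_eq {S₁ S₂ : Matrix (Fin n) (Fin n) (E →L[ℂ] E)}
    {L₁ L₂ L' : Fin n → (E →L[ℂ] E)} (heqL : seriesL S₂ L₂ L₁ = seriesL S₁ L₁ L') :
    S₁ *ᵥ L' = L₂ + S₂ *ᵥ L₁ - L₁ := by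
  funext j
  have hj := congrFun heqL j
  simp only [seriesL] at hj
  rw [Pi.sub_apply, Pi.add_apply, hj, add_sub_cancel_left]

lemma eq_conjTranspose_mulVec_of_seriesL_eq {S₁ S₂ : Matrix (Fin n) (Fin n) (E →L[ℂ] E)}
    {L₁ L₂ L' : Fin n → (E →L[ℂ] E)} (hS₁ : S₁ᴴ * S₁ = 1)
    (heqL : seriesL S₂ L₂ L₁ = seriesL S₁ L₁ L') :
    L' = (S₁ᴴ * (S₂ - 1)) *ᵥ L₁ + S₁ᴴ *ᵥ L₂ := by
  conv_lhs => rw [← one_mulVec L', ← hS₁, ← mulVec_mulVec, mulVec_eq_of_seriesL_eq heqL]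
  rw [mulVec_sub, mulVec_add, mul_sub, mul_one, sub_mulVec, mulVec_mulVec]
  abel

lemma opIm_quadForm_sub_opIm_quadForm {S₁ S₂ : Matrix (Fin n) (Fin n) (E →L[ℂ] E)}
    {L₁ L₂ L' : Fin n → (E →L[ℂ] E)} (hL : S₁ *ᵥ L' = L₂ + S₂ *ᵥ L₁ - L₁) :
    opIm (quadForm L₂ S₂ L₁) - opIm (quadForm L₁ S₁ L') =
      opIm (quadForm L₂ (S₂ + 1) L₁ - quadForm L₁ S₂ L₁) := by
  simp only [quadForm_eq_star_dotProduct_mulVec, hL, add_mulVec, one_mulVec, dotProduct_add,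
    dotProduct_sub, opIm_add, opIm_sub]
  have hswap : opIm (star L₁ ⬝ᵥ L₂) = -opIm (star L₂ ⬝ᵥ L₁) := by
    rw [star_dotProduct, opIm_star]
  have hself : opIm (star L₁ ⬝ᵥ L₁) = 0 :=
    IsSelfAdjoint.opIm_eq_zero (star_dotProduct L₁ L₁).symm
  rw [hswap, hself]
  abel

end SeriesProduct

theorem series_exchange_unique_general {n : ℕ}
    (S₁ S₂ S' : Matrix (Fin n) (Fin n) (E →L[ℂ] E)) (L₁ L₂ L' : Fin n → (E →L[ℂ] E))
    (H₁ H₂ H' : E →L[ℂ] E)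
    (hS₁ : S₁ᴴ * S₁ = 1 ∧ S₁ * S₁ᴴ = 1)
    (heqS : seriesS S₂ S₁ = seriesS S₁ S')
    (heqL : seriesL S₂ L₂ L₁ = seriesL S₁ L₁ L')
    (heqH : seriesH S₂ L₂ L₁ H₁ H₂ = seriesH S₁ L₁ L' H' H₁) :
    S' = S₁ᴴ * S₂ * S₁ ∧
    L' = (fun j => (S₁ᴴ * (S₂ - 1)).mulVec L₁ j + S₁ᴴ.mulVec L₂ j) ∧
    H' = H₂ + opIm (quadForm L₂ (S₂ + 1) L₁ - quadForm L₁ S₂ L₁) := by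
  refine ⟨eq_conjTranspose_mul_of_seriesS_eq hS₁.1 heqS,
    eq_conjTranspose_mulVec_of_seriesL_eq hS₁.1 heqL, ?_⟩
  rw [seriesH_eq_add_opIm_quadForm, seriesH_eq_add_opIm_quadForm] at heqH
  rw [← opIm_quadForm_sub_opIm_quadForm (mulVec_eq_of_seriesL_eq heqL)]
  linear_combination (norm := abel) -heqH

theorem series_exchange_unique {n : ℕ}
    (S₁ S₂ S' : Matrix (Fin n) (Fin n) (E →L[ℂ] E)) (L₁ L₂ L' : Fin n → (E →L[ℂ] E))
    (H₁ H₂ H' : E →L[ℂ] E)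
    (hS₁ : S₁ᴴ * S₁ = 1 ∧ S₁ * S₁ᴴ = 1)
    (hS₂ : S₂ᴴ * S₂ = 1 ∧ S₂ * S₂ᴴ = 1)
    (hS' : S'ᴴ * S' = 1 ∧ S' * S'ᴴ = 1)
    (hH₁ : IsSelfAdjoint H₁) (hH₂ : IsSelfAdjoint H₂) (hH' : IsSelfAdjoint H')
    (heqS : seriesS S₂ S₁ = seriesS S₁ S')
    (heqL : seriesL S₂ L₂ L₁ = seriesL S₁ L₁ L')
    (heqH : seriesH S₂ L₂ L₁ H₁ H₂ = seriesH S₁ L₁ L' H' H₁) :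
    S' = S₁ᴴ * S₂ * S₁ ∧
    L' = (fun j => (S₁ᴴ * (S₂ - 1)).mulVec L₁ j + S₁ᴴ.mulVec L₂ j) ∧
    H' = H₂ + opIm (quadForm L₂ (S₂ + 1) L₁ - quadForm L₁ S₂ L₁) :=
  series_exchange_unique_general S₁ S₂ S' L₁ L₂ L' H₁ H₂ H' hS₁ heqS heqL heqH
end
end

section
/- Let 𝖧 be a complex Hilbert space. For an n-channel system triple G = (S, L, H) define the (1+n)×(1+n) block matrix of bounded operators V(G) := [[ −iH − ½L†L , −L†S ], [ L , S − I ]] (scalar block in the (0,0) corner, row vector −L†S, column vector L, and n×n block S − I), and let P be the (1+n)×(1+n) diagonal matrix whose (0,0) entry is 0 and whose remaining n diagonal entries are the identity operator. If G₁ = (S₁, L₁, H₁) and G₂ = (S₂, L₂, H₂) are n-channel triples and S₂ is an isometry (S₂†S₂ = I), then V(G₂ ◁ G₁) = V(G₁) + V(G₂) + V(G₂) · P · V(G₁). Equivalently (the Itô-product identity dG = dG₁ + dG₂ + dG₂dG₁ for the generator coefficients): the coefficient matrices satisfy G^{αβ} = G₁^{αβ} + G₂^{αβ} + G₂^{α1}G₁^{1β},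 where G^{11} = S − I, G^{10} = L, G^{01} = −L†S, G^{00} = −iH − ½L†L. -/
/-! In block form `V(G)` has the row `-L†S`, the column `L` and the corner `S - 1` around the
scalar entry, and `V(G₂) P V(G₁)` only involves the blocks indexed by the channels, so the
identity splits into four block identities. The `S - 1` block is the ring identity
`S₂S₁ - 1 = (S₁ - 1) + (S₂ - 1) + (S₂ - 1)(S₁ - 1)` and the `L` block is linear. The other two
use the isometry `S₂†S₂ = 1`: it gives `(L₂ + S₂L₁)†S₂S₁ = L₂†S₂S₁ + L₁†S₁` and
`(L₂ + S₂L₁)†(L₂ + S₂L₁) = L₁†L₁ + L₂†L₂ + q + q†` with `q = L₂†S₂L₁`. In the scalar entry this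
cross term contributes `-(q + q†)/2` and the extra Hamiltonian of `G₂ ◁ G₁` contributes
`-(q - q†)/2`; together they give `-q`, the scalar entry of `V(G₂) P V(G₁)`. -/

noncomputable section

open Matrix

variable {E : Type*} [NormedAddCommGroup E] [InnerProductSpace ℂ E] [CompleteSpace E]

/-- The (1+n)×(1+n) generator-coefficient matrix
`V(G) = [[ −iH − ½L†L , −L†S ], [ L , S − I ]]`, indexed by `Fin 1 ⊕ Fin n`
with the scalar block in the (0,0) corner. -/
def Vmat {n : ℕ} (S : Matrix (Fin n) (Fin n) (E →L[ℂ] E)) (L : Fin n → (E →L[ℂ] E))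
    (H : E →L[ℂ] E) : Matrix (Fin 1 ⊕ Fin n) (Fin 1 ⊕ Fin n) (E →L[ℂ] E) :=
  Matrix.fromBlocks
    (Matrix.of fun _ _ => -(Complex.I • H) - (2 : ℂ)⁻¹ • ∑ k, star (L k) * L k)
    (Matrix.of fun _ k => -∑ j, star (L j) * S j k)
    (Matrix.of fun j _ => L j)
    (S - 1)

/-- The diagonal projection `P` with (0,0) entry `0` and the remaining `n`
diagonal entries equal to the identity. -/
def Pmat (E : Type*) [NormedAddCommGroup E] [InnerProductSpace ℂ E] [CompleteSpace E]
    (n : ℕ) : Matrix (Fin 1 ⊕ Fin n) (Fin 1 ⊕ Fin n) (E →L[ℂ] E) :=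
  Matrix.fromBlocks 0 0 0 1

namespace Matrix

variable {k l m o p q α : Type*}

theorem fromBlocks_mul_fromBlocks_zero_one_mul [Fintype l] [Fintype m] [DecidableEq m]
    [Semiring α] (A : Matrix k l α) (B : Matrix k m α) (C : Matrix o l α) (D : Matrix o m α)
    (A' : Matrix l p α) (B' : Matrix l q α) (C' : Matrix m p α) (D' : Matrix m q α) :
    fromBlocks A B C D * (fromBlocks 0 0 0 1 : Matrix (l ⊕ m) (l ⊕ m) α) *
        fromBlocks A' B' C' D' = fromBlocks (B * C') (B * D') (D * C') (D * D') := by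
  simp only [fromBlocks_multiply, Matrix.mul_zero, Matrix.zero_mul, Matrix.mul_one, zero_add,
    add_zero]

variable [Fintype n] [DecidableEq n] [Semiring α] [StarRing α] {M : Matrix n n α}

theorem star_add_mulVec_vecMul_mul (hM : Mᴴ * M = 1) (v w : n → α)
    (N : Matrix n m α) : star (v + M *ᵥ w) ᵥ* (M * N) = star v ᵥ* M ᵥ* N + star w ᵥ* N := by
  rw [star_add, add_vecMul, star_mulVec, vecMul_vecMul, vecMul_vecMul, ← Matrix.mul_assoc, hM,
    Matrix.one_mul]

theorem star_add_mulVec_dotProduct_self (hM : Mᴴ * M = 1) (v w : n → α) :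
    star (v + M *ᵥ w) ⬝ᵥ (v + M *ᵥ w) =
      star w ⬝ᵥ w + star v ⬝ᵥ v + star v ⬝ᵥ (M *ᵥ w) + star (star v ⬝ᵥ (M *ᵥ w)) := by
  have hnorm : star (M *ᵥ w) ⬝ᵥ (M *ᵥ w) = star w ⬝ᵥ w := by
    rw [star_mulVec, dotProduct_mulVec, vecMul_vecMul, hM, vecMul_one]
  rw [star_add, add_dotProduct, dotProduct_add, dotProduct_add, hnorm, star_dotProduct (M *ᵥ w)]
  abel

end Matrix

open Matrix

theorem seriesL_eq {E : Type*} [NormedAddCommGroup E] [InnerProductSpace ℂ E] {n : ℕ}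
    (S₂ : Matrix (Fin n) (Fin n) (E →L[ℂ] E)) (L₂ L₁ : Fin n → (E →L[ℂ] E)) :
    seriesL S₂ L₂ L₁ = L₂ + S₂ *ᵥ L₁ :=
  rfl

theorem quadForm_eq_dotProduct {n : ℕ} (L₂ : Fin n → (E →L[ℂ] E))
    (S : Matrix (Fin n) (Fin n) (E →L[ℂ] E)) (L₁ : Fin n → (E →L[ℂ] E)) :
    quadForm L₂ S L₁ = star L₂ ⬝ᵥ (S *ᵥ L₁) := by
  simp [quadForm, dotProduct, mulVec, Finset.mul_sum, mul_assoc]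

theorem Vmat_eq_fromBlocks {n : ℕ} (S : Matrix (Fin n) (Fin n) (E →L[ℂ] E))
    (L : Fin n → (E →L[ℂ] E)) (H : E →L[ℂ] E) :
    Vmat S L H = fromBlocks (of fun _ _ => -(Complex.I • H) - (2 : ℂ)⁻¹ • (star L ⬝ᵥ L))
      (replicateRow (Fin 1) (-(star L ᵥ* S))) (replicateCol (Fin 1) L) (S - 1) :=
  rfl

theorem I_smul_seriesH {n : ℕ} (S₂ : Matrix (Fin n) (Fin n) (E →L[ℂ] E))
    (L₂ L₁ : Fin n → (E →L[ℂ] E)) (H₁ H₂ : E →L[ℂ] E) :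
    Complex.I • seriesH S₂ L₂ L₁ H₁ H₂ = Complex.I • H₁ + Complex.I • H₂ +
      (2 : ℂ)⁻¹ • (quadForm L₂ S₂ L₁ - star (quadForm L₂ S₂ L₁)) := by
  have hI : Complex.I * (2 * Complex.I)⁻¹ = 2⁻¹ := by
    field_simp
  rw [seriesH, smul_add, smul_add, smul_smul, hI]

theorem Vmat_series_general {n : ℕ}
    (S₁ S₂ : Matrix (Fin n) (Fin n) (E →L[ℂ] E)) (L₁ L₂ : Fin n → (E →L[ℂ] E))
    (H₁ H₂ : E →L[ℂ] E)
    (hS₂ : S₂ᴴ * S₂ = 1) :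
    Vmat (seriesS S₂ S₁) (seriesL S₂ L₂ L₁) (seriesH S₂ L₂ L₁ H₁ H₂) =
      Vmat S₁ L₁ H₁ + Vmat S₂ L₂ H₂ + Vmat S₂ L₂ H₂ * Pmat E n * Vmat S₁ L₁ H₁ := by
  simp only [Vmat_eq_fromBlocks, Pmat, fromBlocks_mul_fromBlocks_zero_one_mul, fromBlocks_add,
    fromBlocks_inj, seriesS, seriesL_eq]
  refine ⟨?_, ?_, ?_, by noncomm_ring⟩
  · ext : 1
    rw [of_apply, Matrix.add_apply, Matrix.add_apply, of_apply, of_apply,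
      replicateRow_mul_replicateCol_apply, star_add_mulVec_dotProduct_self hS₂, I_smul_seriesH,
      quadForm_eq_dotProduct, neg_dotProduct, ← dotProduct_mulVec]
    module
  · rw [← replicateRow_vecMul, ← replicateRow_add, ← replicateRow_add,
      star_add_mulVec_vecMul_mul hS₂, vecMul_sub, vecMul_one, neg_vecMul]
    congr 1
    abel
  · rw [← replicateCol_mulVec, ← replicateCol_add, ← replicateCol_add, sub_mulVec, one_mulVec]
    congr 1
    abel

theorem Vmat_series {n : ℕ}
    (S₁ S₂ : Matrix (Fin n) (Fin n) (E →L[ℂ] E)) (L₁ L₂ : Fin n → (E →L[ℂ] E))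
    (H₁ H₂ : E →L[ℂ] E)
    (hS₂ : S₂ᴴ * S₂ = 1)
    (hH₁ : IsSelfAdjoint H₁) (hH₂ : IsSelfAdjoint H₂) :
    Vmat (seriesS S₂ S₁) (seriesL S₂ L₂ L₁) (seriesH S₂ L₂ L₁ H₁ H₂) =
      Vmat S₁ L₁ H₁ + Vmat S₂ L₂ H₂ + Vmat S₂ L₂ H₂ * Pmat E n * Vmat S₁ L₁ H₁ :=
  Vmat_series_general S₁ S₂ L₁ L₂ H₁ H₂ hS₂
end
end

section
/- Let 𝖧 be a complex Hilbert space, a a bounded operator on 𝖧, γ ≥ 0 and Δ ∈ ℝ, and let α, β ∈ ℂ satisfy α*α + β*β = 1 and α*β = αβ*. Set C = (1, √γ·a, Δ·a†a), N = (1, 0, 0), M = (S_M, 0, 0) with S_M = [[β·1, −α·1],[α·1, β·1]], and define the modified 1-channel triples C′ = (1, β*·√γ·a, Δ·a†a) and N′ = (1, −α*·√γ·a, 0). Then the two networks are parametrically equivalent: (C ⊞ N) ◁ M = M ◁ (C′ ⊞ N′), componentwise in the scattering matrix, coupling vector, and Hamiltonian. -/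
/-! The beamsplitter matrix `M` is unitary (this is what `α*α + β*β = 1` and `α*β = αβ*`
say), and the modified couplings `(β*√γ a, −α*√γ a)` are `M†` applied to `(√γ a, 0)`;
hence `M` maps them back to the original coupling. The scattering matrices agree because
`diag(1, 1)` is the identity, and the Hamiltonians because in each series product one of the
two coupling vectors is zero. -/

noncomputable section

open Matrix

variable {E : Type*} [NormedAddCommGroup E] [InnerProductSpace ℂ E] [CompleteSpace E]

/-- Scattering matrix of the concatenation `G₁ ⊞ G₂` of two 1-channel triples. -/
def concatS (S₁ S₂ : E →L[ℂ] E) : Matrix (Fin 2) (Fin 2) (E →L[ℂ] E) :=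
  !![S₁, 0; 0, S₂]

/-- Coupling vector of the concatenation `G₁ ⊞ G₂` of two 1-channel triples. -/
def concatL (L₁ L₂ : E →L[ℂ] E) : Fin 2 → (E →L[ℂ] E) := ![L₁, L₂]

/-- Hamiltonian of the concatenation `G₁ ⊞ G₂` of two 1-channel triples. -/
def concatH (H₁ H₂ : E →L[ℂ] E) : E →L[ℂ] E := H₁ + H₂

theorem Matrix.smul_one_mulVec_smul_fin_two {R A : Type*} [CommSemiring R] [Semiring A]
    [Algebra R A] (p q r s x y : R) (T : A) :
    !![p • (1 : A), q • 1; r • 1, s • 1] *ᵥ ![x • T, y • T] =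
      ![(p * x + q * y) • T, (r * x + s * y) • T] := by
  ext i
  fin_cases i <;> simp [mulVec, dotProduct, Fin.sum_univ_two, smul_smul, mul_comm, add_smul]

section

omit [CompleteSpace E]

theorem seriesL_zero_right {n : ℕ} (S : Matrix (Fin n) (Fin n) (E →L[ℂ] E))
    (L : Fin n → (E →L[ℂ] E)) : seriesL S L 0 = L := by
  ext1 j
  simp [seriesL]

theorem seriesL_zero_left {n : ℕ} (S : Matrix (Fin n) (Fin n) (E →L[ℂ] E))
    (L : Fin n → (E →L[ℂ] E)) : seriesL S 0 L = S *ᵥ L := by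
  ext1 j
  simp [seriesL]

theorem concatS_one_one : concatS (1 : E →L[ℂ] E) 1 = 1 :=
  Matrix.one_fin_two.symm

theorem beamsplitter_mulVec_concatL (α β c : ℂ) (h₁ : star α * α + star β * β = 1)
    (h₂ : star α * β = α * star β) (T : E →L[ℂ] E) :
    !![β • (1 : E →L[ℂ] E), (-α) • 1; α • 1, β • 1] *ᵥ
        concatL ((star β * c) • T) ((-star α * c) • T) = concatL (c • T) 0 := by
  have hc : β * (star β * c) + -α * (-star α * c) = c := by linear_combination c * h₁
  have h0 : α * (star β * c) + β * (-star α * c) = 0 := by linear_combination (-c) * h₂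
  rw [concatL, Matrix.smul_one_mulVec_smul_fin_two, hc, h0, zero_smul, concatL]

end

theorem quadForm_zero_left {n : ℕ} (S : Matrix (Fin n) (Fin n) (E →L[ℂ] E))
    (L : Fin n → (E →L[ℂ] E)) : quadForm 0 S L = 0 := by
  simp [quadForm]

theorem quadForm_zero_right {n : ℕ} (L : Fin n → (E →L[ℂ] E))
    (S : Matrix (Fin n) (Fin n) (E →L[ℂ] E)) : quadForm L S 0 = 0 := by
  simp [quadForm]

theorem seriesH_zero_left {n : ℕ} (S : Matrix (Fin n) (Fin n) (E →L[ℂ] E))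
    (L : Fin n → (E →L[ℂ] E)) (H₁ H₂ : E →L[ℂ] E) : seriesH S 0 L H₁ H₂ = H₁ + H₂ := by
  simp [seriesH, quadForm_zero_left]

theorem seriesH_zero_right {n : ℕ} (S : Matrix (Fin n) (Fin n) (E →L[ℂ] E))
    (L : Fin n → (E →L[ℂ] E)) (H₁ H₂ : E →L[ℂ] E) : seriesH S L 0 H₁ H₂ = H₁ + H₂ := by
  simp [seriesH, quadForm_zero_right]

theorem beamsplitter_cavity_equivalent_general (a : E →L[ℂ] E) (γ Δ : ℝ)
    (α β : ℂ) (h₁ : star α * α + star β * β = 1) (h₂ : star α * β = α * star β) :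
    seriesS (concatS (1 : E →L[ℂ] E) 1)
        (!![β • (1 : E →L[ℂ] E), (-α) • (1 : E →L[ℂ] E);
            α • (1 : E →L[ℂ] E), β • (1 : E →L[ℂ] E)]) =
      seriesS (!![β • (1 : E →L[ℂ] E), (-α) • (1 : E →L[ℂ] E);
                  α • (1 : E →L[ℂ] E), β • (1 : E →L[ℂ] E)])
        (concatS (1 : E →L[ℂ] E) 1) ∧
    seriesL (concatS (1 : E →L[ℂ] E) 1)
        (concatL ((Real.sqrt γ : ℂ) • a) 0) (0 : Fin 2 → (E →L[ℂ] E)) =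
      seriesL (!![β • (1 : E →L[ℂ] E), (-α) • (1 : E →L[ℂ] E);
                  α • (1 : E →L[ℂ] E), β • (1 : E →L[ℂ] E)])
        (0 : Fin 2 → (E →L[ℂ] E))
        (concatL ((star β * (Real.sqrt γ : ℂ)) • a) ((-star α * (Real.sqrt γ : ℂ)) • a)) ∧
    seriesH (concatS (1 : E →L[ℂ] E) 1)
        (concatL ((Real.sqrt γ : ℂ) • a) 0) (0 : Fin 2 → (E →L[ℂ] E))
        0 (concatH ((Δ : ℂ) • (star a * a)) 0) =
      seriesH (!![β • (1 : E →L[ℂ] E), (-α) • (1 : E →L[ℂ] E);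
                  α • (1 : E →L[ℂ] E), β • (1 : E →L[ℂ] E)])
        (0 : Fin 2 → (E →L[ℂ] E))
        (concatL ((star β * (Real.sqrt γ : ℂ)) • a) ((-star α * (Real.sqrt γ : ℂ)) • a))
        (concatH ((Δ : ℂ) • (star a * a)) 0) 0 := by
  refine ⟨?_, ?_, ?_⟩
  · rw [seriesS, seriesS, concatS_one_one, one_mul, mul_one]
  · rw [seriesL_zero_right, seriesL_zero_left, beamsplitter_mulVec_concatL _ _ _ h₁ h₂]
  · rw [seriesH_zero_right, seriesH_zero_left, zero_add, add_zero]

theorem beamsplitter_cavity_equivalent (a : E →L[ℂ] E) (γ Δ : ℝ) (hγ : 0 ≤ γ)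
    (α β : ℂ) (h₁ : star α * α + star β * β = 1) (h₂ : star α * β = α * star β) :
    seriesS (concatS (1 : E →L[ℂ] E) 1)
        (!![β • (1 : E →L[ℂ] E), (-α) • (1 : E →L[ℂ] E);
            α • (1 : E →L[ℂ] E), β • (1 : E →L[ℂ] E)]) =
      seriesS (!![β • (1 : E →L[ℂ] E), (-α) • (1 : E →L[ℂ] E);
                  α • (1 : E →L[ℂ] E), β • (1 : E →L[ℂ] E)])
        (concatS (1 : E →L[ℂ] E) 1) ∧
    seriesL (concatS (1 : E →L[ℂ] E) 1)
        (concatL ((Real.sqrt γ : ℂ) • a) 0) (0 : Fin 2 → (E →L[ℂ] E)) =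
      seriesL (!![β • (1 : E →L[ℂ] E), (-α) • (1 : E →L[ℂ] E);
                  α • (1 : E →L[ℂ] E), β • (1 : E →L[ℂ] E)])
        (0 : Fin 2 → (E →L[ℂ] E))
        (concatL ((star β * (Real.sqrt γ : ℂ)) • a) ((-star α * (Real.sqrt γ : ℂ)) • a)) ∧
    seriesH (concatS (1 : E →L[ℂ] E) 1)
        (concatL ((Real.sqrt γ : ℂ) • a) 0) (0 : Fin 2 → (E →L[ℂ] E))
        0 (concatH ((Δ : ℂ) • (star a * a)) 0) =
      seriesH (!![β • (1 : E →L[ℂ] E), (-α) • (1 : E →L[ℂ] E);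
                  α • (1 : E →L[ℂ] E), β • (1 : E →L[ℂ] E)])
        (0 : Fin 2 → (E →L[ℂ] E))
        (concatL ((star β * (Real.sqrt γ : ℂ)) • a) ((-star α * (Real.sqrt γ : ℂ)) • a))
        (concatH ((Δ : ℂ) • (star a * a)) 0) 0 :=
  beamsplitter_cavity_equivalent_general a γ Δ α β h₁ h₂
end
end
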